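/- Let h, δh : I → ℝ be C¹ with δh compactly supported in I, let λ > 0, and define f_t on U = {(ξ,η) : ξ ∈ I} by f_t(ξ,η) = λ if η < h(ξ) + t·δh(ξ) and 0 otherwise. Let a : U → ℝ be continuous and bounded. Then lim_{t→0} (1/t) ∫_U a(ξ,η)(f_t − f_0)(ξ,η) dξ dη = λ ∫_I a(ξ, h(ξ)) δh(ξ) dξ. -/

import Mathlib

open MeasureTheory Filter Topology Set

/-!
Between the graphs of `h` and `h + t δh` the integrand `f_t - f_0` equals `± lam`, so by Fubini
`∫_U a (f_t - f_0) = lam ∫_I ∫_{h ξ}^{h ξ + t δh ξ} a(ξ, η) dη dξ`. For fixed `ξ`, `t⁻¹` times the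
inner integral tends to `a(ξ, h ξ) δh ξ` by the fundamental theorem of calculus, and it is bounded
by `C |δh ξ|` when `|a| ≤ C`, so dominated convergence gives the limit.
-/

section Step

variable (lam : ℝ) {c d η : ℝ}

lemma abs_step_sub_step_le :
    |(if η < d then lam else 0) - (if η < c then lam else 0)| ≤ |lam| := by
  split_ifs <;> simp

lemma step_sub_step_eq_zero {R : ℝ} (hc : |c| ≤ R) (hd : |d| ≤ R) (hη : R < |η|) :
    (if η < d then lam else 0) - (if η < c then lam else 0) = 0 := by
  rw [abs_le] at hc hd
  rcases lt_abs.mp hη with hη | hη <;> split_ifs <;>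
    first | exact sub_self _ | (exfalso; linarith)

lemma mul_step_sub_step_eq_indicator (g : ℝ → ℝ) :
    g η * ((if η < d then lam else 0) - (if η < c then lam else 0))
      = lam * ((Ico c d).indicator g η - (Ico d c).indicator g η) := by
  by_cases hd : η < d <;> by_cases hc : η < c <;> simp [hd, hc, not_lt.mp, mul_comm]

end Step

lemma integral_mul_step_sub_step {g : ℝ → ℝ} (hg : Continuous g) (lam c d : ℝ) :
    ∫ η, g η * ((if η < d then lam else 0) - (if η < c then lam else 0))
      = lam * ∫ η in c..d, g η := by
  have hint : ∀ u v : ℝ, Integrable ((Ico u v).indicator g) := fun u v =>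
    (integrable_indicator_iff measurableSet_Ico).mpr
      (hg.integrableOn_Icc.mono_set Ico_subset_Icc_self)
  simp_rw [mul_step_sub_step_eq_indicator]
  rw [integral_const_mul, integral_sub (hint c d) (hint d c),
    integral_indicator measurableSet_Ico, integral_indicator measurableSet_Ico,
    integral_Ico_eq_integral_Ioo, integral_Ico_eq_integral_Ioo, intervalIntegral,
    integral_Ioc_eq_integral_Ioo, integral_Ioc_eq_integral_Ioo]

lemma measurable_step {u : ℝ → ℝ} (hu : Measurable u) (lam : ℝ) :
    Measurable fun p : ℝ × ℝ => if p.2 < u p.1 then lam else 0 :=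
  Measurable.ite (measurableSet_lt measurable_snd (hu.comp measurable_fst)) measurable_const
    measurable_const

lemma integrableOn_prod_univ_mul_step_sub_step {a : ℝ × ℝ → ℝ} {u v : ℝ → ℝ}
    (ha : Continuous a) (hu : Continuous u) (hv : Continuous v) (lam : ℝ)
    {s : Set ℝ} (hs : IsCompact s) :
    IntegrableOn
      (fun p => a p * ((if p.2 < v p.1 then lam else 0) - (if p.2 < u p.1 then lam else 0)))
      (s ×ˢ univ) := by
  obtain ⟨Mu, hMu⟩ := hs.exists_bound_of_continuousOn hu.continuousOn
  obtain ⟨Mv, hMv⟩ := hs.exists_bound_of_continuousOn hv.continuousOn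
  set R := max Mu Mv
  have hK : IsCompact (s ×ˢ Icc (-R) R) := hs.prod isCompact_Icc
  obtain ⟨Ma, hMa⟩ := hK.exists_bound_of_continuousOn ha.continuousOn
  have hmeas := ha.measurable.mul ((measurable_step hv.measurable lam).sub
    (measurable_step hu.measurable lam))
  refine IntegrableOn.of_forall_sdiff_eq_zero (s := s ×ˢ Icc (-R) R) ?_
    (hs.isClosed.measurableSet.prod .univ) ?_
  · refine IntegrableOn.of_bound hK.measure_lt_top hmeas.aestronglyMeasurable (Ma * |lam|) ?_
    filter_upwards [ae_restrict_mem (hK.isClosed.measurableSet)] with p hp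
    rw [norm_mul]
    exact mul_le_mul (hMa p hp) (abs_step_sub_step_le lam) (norm_nonneg _)
      ((norm_nonneg _).trans (hMa p hp))
  · rintro ⟨ξ, η⟩ ⟨⟨hξ, -⟩, hpK⟩
    have hη : R < |η| := by
      by_contra! hη
      exact hpK ⟨hξ, abs_le.mp hη⟩
    rw [step_sub_step_eq_zero lam ((hMu ξ hξ).trans (le_max_left _ _))
      ((hMv ξ hξ).trans (le_max_right _ _)) hη, mul_zero]

lemma setIntegral_prod_univ_mul_step_sub_step {a : ℝ × ℝ → ℝ} {u v : ℝ → ℝ}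
    (ha : Continuous a) (hu : Continuous u) (hv : Continuous v) (lam : ℝ)
    {s : Set ℝ} (hs : Bornology.IsBounded s) :
    ∫ p in s ×ˢ univ, a p * ((if p.2 < v p.1 then lam else 0) - (if p.2 < u p.1 then lam else 0))
      = lam * ∫ ξ in s, ∫ η in u ξ..v ξ, a (ξ, η) := by
  have hint := (integrableOn_prod_univ_mul_step_sub_step ha hu hv lam hs.isCompact_closure).mono_set
    (prod_mono subset_closure subset_rfl)
  rw [Measure.volume_eq_prod] at hint ⊢
  rw [setIntegral_prod _ hint, Measure.restrict_univ, ← integral_const_mul]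
  congr 1 with ξ
  exact integral_mul_step_sub_step (ha.comp (Continuous.prodMk_right ξ)) lam (u ξ) (v ξ)

lemma tendsto_inv_mul_integral_add_mul {g : ℝ → ℝ} (hg : Continuous g) (c d : ℝ) :
    Tendsto (fun t => t⁻¹ * ∫ η in c..c + t * d, g η) (𝓝[≠] 0) (𝓝 (g c * d)) := by
  have hprim : HasDerivAt (fun x => ∫ η in c..x, g η) (g c) (c + 0 * d) := by
    simpa using intervalIntegral.integral_hasDerivAt_right (hg.intervalIntegrable c c)
      (hg.stronglyMeasurableAtFilter _ _) hg.continuousAt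
  have hline : HasDerivAt (fun t : ℝ => c + t * d) d 0 := by
    simpa using ((hasDerivAt_id (0 : ℝ)).mul_const d).const_add c
  refine (hasDerivAt_iff_tendsto_slope.mp (hprim.comp 0 hline)).congr fun t => ?_
  simp [slope_def_field, div_eq_inv_mul]

lemma continuous_intervalIntegral_of_continuous {f : ℝ × ℝ → ℝ} (hf : Continuous f)
    {u v : ℝ → ℝ} (hu : Continuous u) (hv : Continuous v) :
    Continuous fun ξ => ∫ η in u ξ..v ξ, f (ξ, η) := by
  have hprim {w : ℝ → ℝ} (hw : Continuous w) : Continuous fun ξ => ∫ η in (0 : ℝ)..w ξ, f (ξ, η) :=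
    intervalIntegral.continuous_parametric_intervalIntegral_of_continuous
      (f := fun ξ η => f (ξ, η)) hf hw
  refine ((hprim hv).sub (hprim hu)).congr fun ξ => ?_
  have hfξ : Continuous fun η => f (ξ, η) := hf.comp (Continuous.prodMk_right ξ)
  exact intervalIntegral.integral_interval_sub_left (hfξ.intervalIntegrable _ _)
    (hfξ.intervalIntegrable _ _)

lemma tendsto_setIntegral_inv_mul_integral {a : ℝ × ℝ → ℝ} (ha : Continuous a) {C : ℝ}
    (hC : ∀ p, |a p| ≤ C) {h δh : ℝ → ℝ} (hh : Continuous h) (hδh : Continuous δh)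
    {s : Set ℝ} (hδs : IntegrableOn δh s) :
    Tendsto (fun t => ∫ ξ in s, t⁻¹ * ∫ η in h ξ..h ξ + t * δh ξ, a (ξ, η)) (𝓝[≠] 0)
      (𝓝 (∫ ξ in s, a (ξ, h ξ) * δh ξ)) := by
  refine tendsto_integral_filter_of_dominated_convergence (fun ξ => C * |δh ξ|)
    (Eventually.of_forall fun t => ?_) ?_ (hδs.norm.const_mul C)
    (Eventually.of_forall fun ξ => ?_)
  · exact (continuous_const.mul (continuous_intervalIntegral_of_continuous ha hh
      (hh.add (continuous_const.mul hδh)))).aestronglyMeasurable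
  · filter_upwards [self_mem_nhdsWithin] with t (ht : t ≠ 0)
    refine Eventually.of_forall fun ξ => ?_
    have hbound := intervalIntegral.norm_integral_le_of_norm_le_const
      (f := fun η => a (ξ, η)) (a := h ξ) (b := h ξ + t * δh ξ) fun η _ => hC (ξ, η)
    rw [add_sub_cancel_left, abs_mul] at hbound
    calc ‖t⁻¹ * ∫ η in h ξ..h ξ + t * δh ξ, a (ξ, η)‖
        ≤ |t|⁻¹ * (C * (|t| * |δh ξ|)) := by
          rw [norm_mul, norm_inv, Real.norm_eq_abs]; gcongr
      _ = C * |δh ξ| := by field_simp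
  · exact tendsto_inv_mul_integral_add_mul (ha.comp (Continuous.prodMk_right ξ)) (h ξ) (δh ξ)

theorem first_variation_general (A B : ℝ) (h δh : ℝ → ℝ)
    (hh : ContDiff ℝ 1 h) (hδh : ContDiff ℝ 1 δh)
    (lam : ℝ)
    (a : ℝ × ℝ → ℝ) (ha : Continuous a) (hab : ∃ C, ∀ p, |a p| ≤ C) :
    Tendsto (fun t : ℝ =>
        (1 / t) * ∫ p in (Set.Ioo A B) ×ˢ (Set.univ : Set ℝ),
          a p * ((if p.2 < h p.1 + t * δh p.1 then lam else 0) -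
                 (if p.2 < h p.1 then lam else 0)))
      (𝓝[≠] 0)
      (𝓝 (lam * ∫ ξ in Set.Ioo A B, a (ξ, h ξ) * δh ξ)) := by
  obtain ⟨C, hC⟩ := hab
  have hδIoo : IntegrableOn δh (Ioo A B) :=
    hδh.continuous.integrableOn_Icc.mono_set Ioo_subset_Icc_self
  refine ((tendsto_setIntegral_inv_mul_integral ha hC hh.continuous hδh.continuous hδIoo).const_mul
    lam).congr fun t => ?_
  have hperturbed : Continuous fun ξ => h ξ + t * δh ξ := by fun_prop
  rw [setIntegral_prod_univ_mul_step_sub_step ha hh.continuous hperturbed lam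
    (Metric.isBounded_Ioo A B), integral_const_mul]
  ring

/-- first variation of `∫ a f` under a normal perturbation of the
graph `η = h(ξ)`: with `f_t = lam·1_{η < h(ξ)+t δh(ξ)}` on `U = I × ℝ`,
`lim_{t→0} (1/t) ∫_U a (f_t − f_0) = lam ∫_I a(ξ, h(ξ)) δh(ξ) dξ`. -/
theorem first_variation (A B : ℝ) (hAB : A < B) (h δh : ℝ → ℝ)
    (hh : ContDiff ℝ 1 h) (hδh : ContDiff ℝ 1 δh)
    (hsupp : tsupport δh ⊆ Set.Ioo A B)
    (lam : ℝ) (hlam : 0 < lam)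
    (a : ℝ × ℝ → ℝ) (ha : Continuous a) (hab : ∃ C, ∀ p, |a p| ≤ C) :
    Tendsto (fun t : ℝ =>
        (1 / t) * ∫ p in (Set.Ioo A B) ×ˢ (Set.univ : Set ℝ),
          a p * ((if p.2 < h p.1 + t * δh p.1 then lam else 0) -
                 (if p.2 < h p.1 then lam else 0)))
      (𝓝[≠] 0)
      (𝓝 (lam * ∫ ξ in Set.Ioo A B, a (ξ, h ξ) * δh ξ)) :=
  first_variation_general A B h δh hh hδh lam a ha hab
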